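/- arXiv:2109.06141 — 5 statements merged into one kernel-verified Lean document; each statement's English description precedes it below -/
import Mathlib

section
/- If each loss function f_i : ℝ^d → ℝ is L-Lipschitz, then for any t ≠ 0 the tilted empirical risk θ ↦ (1/t)·log((1/N)·∑_{i∈[N]} exp(t·f_i(θ))) is L-Lipschitz. -/
open Real

/-- Raising every `g i` by at most `c` raises the log-sum-exp by at most `c`. -/
theorem LipschitzWith.log_sum_exp {α ι : Type*} [PseudoMetricSpace α] [Fintype ι] {K : NNReal}
    {g : ι → α → ℝ} (hg : ∀ i, LipschitzWith K (g i)) :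
    LipschitzWith K (fun x => log (∑ i, exp (g i x))) := by
  rcases isEmpty_or_nonempty ι with _ | _
  · simpa using LipschitzWith.const' (α := α) (0 : ℝ)
  refine LipschitzWith.of_le_add_mul K fun x y => ?_
  have hpos : ∀ z, 0 < ∑ i, exp (g i z) := fun z =>
    Finset.sum_pos (fun i _ => exp_pos _) Finset.univ_nonempty
  have hsum : ∑ i, exp (g i x) ≤ exp (K * dist x y) * ∑ i, exp (g i y) := by
    rw [Finset.mul_sum]
    gcongr with i
    rw [← exp_add, add_comm]
    exact exp_le_exp.mpr ((hg i).le_add_mul x y)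
  calc log (∑ i, exp (g i x)) ≤ log (exp (K * dist x y) * ∑ i, exp (g i y)) :=
        log_le_log (hpos x) hsum
    _ = log (∑ i, exp (g i y)) + K * dist x y := by
        rw [log_mul (exp_ne_zero _) (hpos y).ne', log_exp, add_comm]

theorem tilted_risk_lipschitz (N d : ℕ) (hN : 0 < N) (t : ℝ) (ht : t ≠ 0) (L : NNReal)
    (f : Fin N → EuclideanSpace ℝ (Fin d) → ℝ)
    (hf : ∀ i, LipschitzWith L (f i)) :
    LipschitzWith L
      (fun θ => (1 / t) * Real.log ((1 / (N : ℝ)) * ∑ i, Real.exp (t * f i θ))) := by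
  have hlse : LipschitzWith (‖t‖₊ * L) (fun θ => log (∑ i, exp (t * f i θ))) :=
    LipschitzWith.log_sum_exp fun i => (lipschitzWith_smul t).comp (hf i)
  have hsplit : ∀ θ, log ((1 / (N : ℝ)) * ∑ i, exp (t * f i θ))
      = log (1 / N) + log (∑ i, exp (t * f i θ)) := fun θ => by
    have : Nonempty (Fin N) := Fin.pos_iff_nonempty.mp hN
    exact log_mul (by positivity) (Finset.sum_pos (fun i _ => exp_pos _) Finset.univ_nonempty).ne'
  have hconst : ‖1 / t‖₊ * (0 + ‖t‖₊ * L) = L := by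
    rw [zero_add, ← mul_assoc, ← nnnorm_mul, one_div_mul_cancel ht, nnnorm_one, one_mul]
  simp only [hsplit]
  exact hconst ▸ (lipschitzWith_smul (1 / t)).comp ((LipschitzWith.const (log (1 / N))).add hlse)
end

section
/- The tilted empirical risk equals the average loss plus (1/t) times the KL divergence between the uniform weight vector and the tilted weight vector: R̃(t;θ) = (1/N)·∑_i f_i(θ) + (1/t)·∑_{i∈[N]} (1/N)·log((1/N)/w_i(t;θ)), where w_i(t;θ) = exp(t·f_i(θ)) / ∑_{j} exp(t·f_j(θ)). -/
open Real Finset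

section TiltedWeights

variable {ι : Type*} [Fintype ι] (t : ℝ) (f : ι → ℝ)

theorem log_div_tilted_weight {c : ℝ} (hc : c ≠ 0) (i : ι) :
    log (c / (exp (t * f i) / ∑ j, exp (t * f j)))
      = log c + log (∑ j, exp (t * f j)) - t * f i := by
  have hS : 0 < ∑ j, exp (t * f j) :=
    (exp_pos _).trans_le (single_le_sum (fun j _ => (exp_pos (t * f j)).le) (mem_univ i))
  rw [log_div hc (div_pos (exp_pos _) hS).ne', log_div (exp_ne_zero _) hS.ne', log_exp]
  ring

theorem sum_uniform_mul_log_div_tilted_weight [Nonempty ι] :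
    ∑ i, (1 / (Fintype.card ι : ℝ)) *
        log ((1 / (Fintype.card ι : ℝ)) / (exp (t * f i) / ∑ j, exp (t * f j)))
      = log ((1 / (Fintype.card ι : ℝ)) * ∑ i, exp (t * f i))
        - t * ((1 / (Fintype.card ι : ℝ)) * ∑ i, f i) := by
  have hn : (0 : ℝ) < Fintype.card ι := Nat.cast_pos.mpr Fintype.card_pos
  have hS : 0 < ∑ j, exp (t * f j) := sum_pos (fun j _ => exp_pos _) univ_nonempty
  simp only [log_div_tilted_weight t f (one_div_pos.mpr hn).ne', ← mul_sum, sum_sub_distrib,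
    sum_const, card_univ, nsmul_eq_mul, log_mul (one_div_pos.mpr hn).ne' hS.ne']
  field_simp

end TiltedWeights

theorem tilted_risk_eq_mean_add_KL (N : ℕ) (hN : 0 < N) (t : ℝ) (ht : t ≠ 0)
    (f : Fin N → ℝ) :
    (1 / t) * Real.log ((1 / (N : ℝ)) * ∑ i, Real.exp (t * f i))
      = (1 / (N : ℝ)) * ∑ i, f i
        + (1 / t) * ∑ i, (1 / (N : ℝ)) *
            Real.log ((1 / (N : ℝ)) / (Real.exp (t * f i) / ∑ j, Real.exp (t * f j))) := by
  have : Nonempty (Fin N) := Fin.pos_iff_nonempty.mp hN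
  have hKL := sum_uniform_mul_log_div_tilted_weight t f
  rw [Fintype.card_fin] at hKL
  rw [hKL]
  field_simp
  ring
end

section
/- The entropic risk identity: for a random variable X with finite support, distribution p, and a positive density model p_θ, (1/t)·log ∑_x p(x)·p_θ(x)^{−t} = ∑_x p(x)·log(1/p_θ(x)) + (1/t)·∑_x p(x)·log( p(x) / T(x) ), where T(x) := p(x)·p_θ(x)^{−t} / ∑_u p(u)·p_θ(u)^{−t} is the mismatched tilted distribution. -/
/-!
Writing `Z = ∑ p u · w u` with `w = p_θ^{-t}`, the ratio `p x / T x` equals `Z / w x`, so the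
divergence term is `log Z - t · H(p‖p_θ)` because `∑ p = 1`; dividing by `t` cancels the cross
entropy and leaves `(1/t) · log Z`.
-/

open Real Finset

namespace EntropicRisk

variable {X : Type*} [Fintype X]

/-- For `w = p_θ^{-t}` this is the mismatched tilted distribution `T`. -/
noncomputable def tilted (p w : X → ℝ) (x : X) : ℝ :=
  p x * w x / ∑ u, p u * w u

theorem div_tilted {p w : X → ℝ} {x : X} (hpx : p x ≠ 0) :
    p x / tilted p w x = (∑ u, p u * w u) / w x := by
  rw [tilted, div_div_eq_mul_div, mul_div_mul_left _ _ hpx]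

theorem sum_mul_log_div_tilted {p w : X → ℝ} (hps : ∑ x, p x = 1) (hw : ∀ x, w x ≠ 0)
    (hZ : ∑ u, p u * w u ≠ 0) :
    ∑ x, p x * log (p x / tilted p w x) = log (∑ u, p u * w u) - ∑ x, p x * log (w x) := by
  have hterm : ∀ x, p x * log (p x / tilted p w x)
      = p x * log (∑ u, p u * w u) - p x * log (w x) := fun x => by
    rcases eq_or_ne (p x) 0 with hpx | hpx
    · simp [hpx]
    · rw [div_tilted hpx, log_div hZ (hw x), mul_sub]
  rw [sum_congr rfl fun x _ => hterm x, sum_sub_distrib, ← sum_mul, hps, one_mul]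

theorem sum_mul_log_rpow_neg {p q : X → ℝ} (hq : ∀ x, 0 < q x) (t : ℝ) :
    ∑ x, p x * log (q x ^ (-t)) = t * ∑ x, p x * log (1 / q x) := by
  rw [mul_sum]
  refine sum_congr rfl fun x _ => ?_
  rw [log_rpow (hq x), one_div, log_inv]
  ring

end EntropicRisk

open EntropicRisk in
theorem entropic_risk_identity (X : Type*) [Fintype X] (p ptheta : X → ℝ) (t : ℝ)
    (ht : t ≠ 0) (hp : ∀ x, 0 < p x) (hps : ∑ x, p x = 1) (hptheta : ∀ x, 0 < ptheta x) :
    (1 / t) * Real.log (∑ x, p x * ptheta x ^ (-t))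
      = (∑ x, p x * Real.log (1 / ptheta x))
        + (1 / t) * ∑ x, p x *
            Real.log (p x / (p x * ptheta x ^ (-t) / ∑ u, p u * ptheta u ^ (-t))) := by
  have hw : ∀ x, 0 < ptheta x ^ (-t) := fun x => rpow_pos_of_pos (hptheta x) _
  have hZ : 0 < ∑ u, p u * ptheta u ^ (-t) :=
    sum_pos (fun x _ => mul_pos (hp x) (hw x))
      (nonempty_of_sum_ne_zero (hps.trans_ne one_ne_zero))
  have hkl := sum_mul_log_div_tilted (w := fun x => ptheta x ^ (-t)) hps
    (fun x => (hw x).ne') hZ.ne'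
  simp only [tilted, sum_mul_log_rpow_neg hptheta] at hkl
  rw [hkl]
  field_simp
  ring
end

section
/- Quantile bound via tilting: let f_1,...,f_N ∈ ℝ, let m := min_i f_i, and let Q̃(γ) := (1/N)·#{i : f_i ≥ γ} be the empirical tail fraction. Then for all t > 0 and all γ > m, Q̃(γ) ≤ ( (1/N)·∑_i exp(t·(f_i − m)) − 1 ) / ( exp(t·(γ − m)) − 1 ). -/
/-!
Markov's inequality for the counting measure, applied to the nonnegative increasing transform
`x ↦ exp (t (x - m)) - 1` of the values `f i ≥ m`: every index with `f i ≥ γ` contributes at least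
`exp (t (γ - m)) - 1` to the sum of the transformed values, and the other indices contribute
nonnegatively.
-/

open Finset

lemma card_filter_le_mul_le_sum_of_monotone {ι : Type*} (s : Finset ι) (f : ι → ℝ) {φ : ℝ → ℝ}
    (hφ : Monotone φ) (hφ_nonneg : ∀ i ∈ s, 0 ≤ φ (f i)) (γ : ℝ) :
    #(s.filter (fun i => γ ≤ f i)) * φ γ ≤ ∑ i ∈ s, φ (f i) := by
  calc (#(s.filter (fun i => γ ≤ f i)) : ℝ) * φ γ
      = #(s.filter (fun i => γ ≤ f i)) • φ γ := (nsmul_eq_mul _ _).symm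
    _ ≤ ∑ i ∈ s.filter (fun i => γ ≤ f i), φ (f i) :=
        card_nsmul_le_sum _ _ _ fun i hi => hφ (mem_filter.mp hi).2
    _ ≤ ∑ i ∈ s, φ (f i) :=
        sum_le_sum_of_subset_of_nonneg (filter_subset _ _) fun i hi _ => hφ_nonneg i hi

lemma monotone_exp_mul_sub_sub_one {t : ℝ} (ht : 0 ≤ t) (m : ℝ) :
    Monotone fun x => Real.exp (t * (x - m)) - 1 := fun x y hxy => by
  dsimp only
  gcongr

lemma exp_mul_sub_sub_one_pos {t m x : ℝ} (ht : 0 < t) (hx : m < x) :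
    0 < Real.exp (t * (x - m)) - 1 :=
  sub_pos.mpr (Real.one_lt_exp_iff.mpr (mul_pos ht (sub_pos.mpr hx)))

lemma exp_mul_sub_sub_one_nonneg {t m x : ℝ} (ht : 0 ≤ t) (hx : m ≤ x) :
    0 ≤ Real.exp (t * (x - m)) - 1 :=
  sub_nonneg.mpr (Real.one_le_exp (mul_nonneg ht (sub_nonneg.mpr hx)))

theorem quantile_bound_via_tilting (N : ℕ) (f : Fin N → ℝ)
    (hne : (Finset.univ : Finset (Fin N)).Nonempty) (t γ : ℝ) (ht : 0 < t)
    (hγ : Finset.univ.inf' hne f < γ) :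
    ((Finset.univ.filter (fun i => γ ≤ f i)).card : ℝ) / N
      ≤ ((1 / (N : ℝ)) * (∑ i, Real.exp (t * (f i - Finset.univ.inf' hne f))) - 1)
        / (Real.exp (t * (γ - Finset.univ.inf' hne f)) - 1) := by
  set m := univ.inf' hne f
  have hN : (0 : ℝ) < N := by
    exact_mod_cast Fin.pos_iff_nonempty.mpr (univ_nonempty_iff.mp hne)
  have hD := exp_mul_sub_sub_one_pos ht hγ
  have markov := card_filter_le_mul_le_sum_of_monotone univ f
    (monotone_exp_mul_sub_sub_one ht.le m)
    (fun i _ => exp_mul_sub_sub_one_nonneg ht.le (inf'_le f (mem_univ i))) γ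
  have hsum : ∑ i, (Real.exp (t * (f i - m)) - 1) = ∑ i, Real.exp (t * (f i - m)) - N := by
    simp [sum_sub_distrib]
  rw [hsum] at markov
  rw [le_div_iff₀ hD, div_mul_eq_mul_div, div_le_iff₀ hN]
  calc _ ≤ ∑ i, Real.exp (t * (f i - m)) - N := markov
    _ = _ := by field_simp
end

section
/- Smoothness bound for negative tilt: suppose each f_i : ℝ^d → ℝ is twice continuously differentiable with Hessian satisfying 0 ≼ ∇²f_i(θ) ≼ β_max·I for all θ. Then for every t < 0, the Hessian of the tilted risk R̃(t;θ) = (1/t)·log((1/N)·∑_i exp(t·f_i(θ))) satisfies ∇²R̃(t;θ) ≼ β_max·I. -/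
/-!
Restrict to a line `s ↦ θ + s • v`. Writing `eᵢ = exp (t uᵢ)` for `uᵢ(s) = fᵢ(θ + s • v)`,
the derivative of the tilted risk is the `e`-weighted mean of the `uᵢ'`, and since
`(∑ eᵢ)' = t ∑ uᵢ' eᵢ` its second derivative is the weighted mean of the `uᵢ''` plus `t` times
the weighted variance of the `uᵢ'`. The mean is at most `βmax ‖v‖²`, and for `t < 0` the
variance term is nonpositive by Cauchy–Schwarz.
-/

open Real Finset

theorem iteratedDeriv_comp_add_smul {𝕜 E F : Type*} [NontriviallyNormedField 𝕜]
    [NormedAddCommGroup E] [NormedSpace 𝕜 E] [NormedAddCommGroup F] [NormedSpace 𝕜 F]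
    {n : ℕ} {h : E → F} (hh : ContDiff 𝕜 n h) (x v : E) :
    iteratedDeriv n (fun s : 𝕜 => h (x + s • v)) 0 = iteratedFDeriv 𝕜 n h x (fun _ => v) := by
  have hline : (fun s : 𝕜 => h (x + s • v)) =
      (fun z => h (x + z)) ∘ ContinuousLinearMap.smulRight (1 : 𝕜 →L[𝕜] 𝕜) v := by
    ext s; simp
  have hshift : ContDiff 𝕜 n fun z => h (x + z) := hh.comp (contDiff_const.add contDiff_id)
  rw [iteratedDeriv_eq_iteratedFDeriv, hline,
    ContinuousLinearMap.iteratedFDeriv_comp_right _ hshift _ le_rfl]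
  simp [iteratedFDeriv_comp_add_left]

theorem sq_sum_mul_le_sum_sq_mul_mul_sum {ι : Type*} (s : Finset ι) (a : ι → ℝ) {c : ι → ℝ}
    (hc : ∀ i ∈ s, 0 ≤ c i) : (∑ i ∈ s, a i * c i) ^ 2 ≤ (∑ i ∈ s, a i ^ 2 * c i) * ∑ i ∈ s, c i :=
  sum_sq_le_sum_mul_sum_of_sq_le_mul s (fun i hi => mul_nonneg (sq_nonneg _) (hc i hi)) hc
    fun i _ => (by ring : (a i * c i) ^ 2 = a i ^ 2 * c i * c i).le

section TiltedRisk

variable {ι : Type*} [Fintype ι]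

noncomputable def tiltedRisk (t : ℝ) (x : ι → ℝ) : ℝ :=
  1 / t * log (1 / (Fintype.card ι : ℝ) * ∑ i, exp (t * x i))

variable [Nonempty ι] {t : ℝ}

theorem contDiff_tiltedRisk {n : WithTop ℕ∞} : ContDiff ℝ n (tiltedRisk (ι := ι) t) := by
  refine contDiff_const.mul (ContDiff.log ?_ fun x => by positivity)
  exact contDiff_const.mul (ContDiff.sum fun i _ => (contDiff_const.mul (contDiff_apply ℝ ℝ i)).exp)

theorem hasDerivAt_tiltedRisk_comp (ht : t ≠ 0) {u : ι → ℝ → ℝ} {u' : ι → ℝ} {s : ℝ}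
    (hu : ∀ i, HasDerivAt (u i) (u' i) s) :
    HasDerivAt (fun s => tiltedRisk t fun i => u i s)
      ((∑ i, u' i * exp (t * u i s)) / ∑ i, exp (t * u i s)) s := by
  have hsum : HasDerivAt (fun s => ∑ i, exp (t * u i s)) (t * ∑ i, u' i * exp (t * u i s)) s := by
    rw [mul_sum]
    exact HasDerivAt.fun_sum fun i _ =>
      ((hu i).const_mul t).exp.congr_deriv (by ring)
  unfold tiltedRisk
  refine ((hsum.const_mul (1 / (Fintype.card ι : ℝ))).log (by positivity)).const_mul (1 / t)
    |>.congr_deriv ?_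
  field_simp

theorem iteratedDeriv_two_tiltedRisk_comp_le (ht : t < 0) {u : ι → ℝ → ℝ} {s C : ℝ}
    (hu : ∀ i, Differentiable ℝ (u i)) (hu' : ∀ i, DifferentiableAt ℝ (deriv (u i)) s)
    (hC : ∀ i, iteratedDeriv 2 (u i) s ≤ C) :
    iteratedDeriv 2 (fun s => tiltedRisk t fun i => u i s) s ≤ C := by
  simp only [iteratedDeriv_succ, iteratedDeriv_zero] at hC ⊢
  set e : ι → ℝ → ℝ := fun i s => exp (t * u i s)
  have he : ∀ i, HasDerivAt (e i) (t * deriv (u i) s * e i s) s := fun i =>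
    (((hu i s).hasDerivAt).const_mul t).exp.congr_deriv (by ring)
  have hM : HasDerivAt (fun s => ∑ i, deriv (u i) s * e i s)
      (∑ i, (deriv (deriv (u i)) s + t * deriv (u i) s ^ 2) * e i s) s :=
    HasDerivAt.fun_sum fun i _ => ((hu' i).hasDerivAt.fun_mul (he i)).congr_deriv (by ring)
  have hS : HasDerivAt (fun s => ∑ i, e i s) (t * ∑ i, deriv (u i) s * e i s) s :=
    (HasDerivAt.fun_sum fun i _ => he i).congr_deriv (by rw [mul_sum]; congr! 1; ring)
  have hS_pos : 0 < ∑ i, e i s := by positivity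
  have hderiv : deriv (fun s => tiltedRisk t fun i => u i s) =
      fun s => (∑ i, deriv (u i) s * e i s) / ∑ i, e i s :=
    funext fun s => (hasDerivAt_tiltedRisk_comp ht.ne fun i => (hu i s).hasDerivAt).deriv
  rw [hderiv, (hM.fun_div hS hS_pos.ne').deriv, div_le_iff₀ (by positivity)]
  have hmean : ∑ i, deriv (deriv (u i)) s * e i s ≤ C * ∑ i, e i s := by
    rw [mul_sum]
    exact sum_le_sum fun i _ => mul_le_mul_of_nonneg_right (hC i) (exp_pos _).le
  have hvar := sq_sum_mul_le_sum_sq_mul_mul_sum univ (fun i => deriv (u i) s)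
    (c := fun i => e i s) fun i _ => (exp_pos _).le
  simp only [add_mul, sum_add_distrib, mul_assoc, ← mul_sum]
  linarith [mul_le_mul_of_nonneg_right hmean hS_pos.le, mul_le_mul_of_nonpos_left hvar ht.le]

end TiltedRisk

theorem tilted_hessian_bound_neg_t (N d : ℕ) (hN : 0 < N) (t βmax : ℝ) (ht : t < 0)
    (f : Fin N → EuclideanSpace ℝ (Fin d) → ℝ)
    (hf : ∀ i, ContDiff ℝ 2 (f i))
    (hH : ∀ i θ v, 0 ≤ iteratedFDeriv ℝ 2 (f i) θ ![v, v] ∧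
        iteratedFDeriv ℝ 2 (f i) θ ![v, v] ≤ βmax * ‖v‖ ^ 2) :
    ∀ (θ v : EuclideanSpace ℝ (Fin d)),
      iteratedFDeriv ℝ 2
          (fun θ => (1 / t) * Real.log ((1 / (N : ℝ)) * ∑ i, Real.exp (t * f i θ))) θ ![v, v]
        ≤ βmax * ‖v‖ ^ 2 := by
  intro θ v
  have : Nonempty (Fin N) := ⟨⟨0, hN⟩⟩
  have hrisk : (fun θ => (1 / t) * Real.log ((1 / (N : ℝ)) * ∑ i, Real.exp (t * f i θ))) =
      fun θ => tiltedRisk t fun i => f i θ := by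
    simp only [tiltedRisk, Fintype.card_fin]
  have hvv : ![v, v] = fun _ => v := by
    ext i; fin_cases i <;> rfl
  have hline : ∀ i, ContDiff ℝ 2 fun s : ℝ => f i (θ + s • v) := fun i =>
    (hf i).comp (contDiff_const.add (contDiff_id.smul contDiff_const))
  have hR : ContDiff ℝ 2 fun θ => tiltedRisk t fun i => f i θ :=
    contDiff_tiltedRisk.comp (contDiff_pi.2 hf)
  rw [hrisk, hvv, ← iteratedDeriv_comp_add_smul hR]
  refine iteratedDeriv_two_tiltedRisk_comp_le ht (fun i => (hline i).differentiable two_ne_zero)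
    (fun i => (hline i).differentiable_deriv_two _) fun i => ?_
  rw [iteratedDeriv_comp_add_smul (hf i), ← hvv]
  exact (hH i θ v).2
end
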